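/- arXiv:1609.00424 — 3 statements merged into one kernel-verified Lean document; each statement's English description precedes it below -/
import Mathlib

section
/- Let λ ∈ (0,1), let X have pmf P(X=0) = e^{-λ}, P(X=1) = λe^{-λ}, P(X=x) = ((x-1)^{x-2}/(x(x-2)!)) λ^x e^{-xλ} for x ≥ 2, and let W = max(X, 1). Then E[W] = E[X]/λ = e^{-λ}/(1-λ). -/
/-!
With `a k = (k+1)^k / k!`, the mean splits as `P(X=0) + P(X=1) + λ² e^{-λ} F(λ)` where
`F(x) = ∑ a k x^k e^{-(k+1)x}`, and everything reduces to the tree-function identity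
`F(x) = 1/(1-x)` on `[0, 1)`.

For small `|x|` expand each `e^{-(k+1)x}` and regroup the absolutely convergent double series
by powers of `x`: the coefficient of `x^n` is `∑_k (-1)^(n-k) C(n,k) (k+1)^n / n!`, the `n`-th
forward difference of `t ↦ t^n` divided by `n!`, which is `1`. Since `F(x) = e^{-x} S(x e^{-x})`
with `S(y) = ∑ a k y^k` of radius at least `1/e`, and `x e^{-x} < 1/e` for `x ≠ 1`, `F` is
analytic on `[0, 1)`, so the identity theorem extends `F(x) = 1/(1-x)` from a neighbourhood of `0`.
-/

open Finset Real FormalMultilinearSeries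
open scoped Nat

noncomputable def treeCoeff (k : ℕ) : ℝ := ((k : ℝ) + 1) ^ k / k !

lemma treeCoeff_pos (k : ℕ) : 0 < treeCoeff k := by unfold treeCoeff; positivity

lemma treeCoeff_mul_pow_le {y : ℝ} (hy : 0 ≤ y) (k : ℕ) :
    treeCoeff k * y ^ k ≤ exp 1 * (exp 1 * y) ^ k :=
  calc treeCoeff k * y ^ k ≤ exp (k + 1) * y ^ k := by
        gcongr; exact pow_div_factorial_le_exp _ (by positivity) k
    _ = exp 1 * (exp 1 * y) ^ k := by rw [mul_pow, ← exp_nat_mul, add_comm, exp_add]; ring_nf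

lemma summable_treeCoeff_mul_pow {y : ℝ} (hy0 : 0 ≤ y) (hy : exp 1 * y < 1) :
    Summable fun k ↦ treeCoeff k * y ^ k :=
  .of_nonneg_of_le (fun k ↦ by have := treeCoeff_pos k; positivity) (treeCoeff_mul_pow_le hy0)
    ((summable_geometric_of_lt_one (by positivity) hy).mul_left _)

lemma treeCoeff_mul_pow_mul_exp (x s : ℝ) (k : ℕ) :
    treeCoeff k * x ^ k * exp ((k + 1) * s) = exp s * (treeCoeff k * (x * exp s) ^ k) := by
  rw [mul_pow, ← exp_nat_mul, add_mul, one_mul, exp_add]; ring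

lemma mul_exp_neg_lt {x : ℝ} (hx : x ≠ 1) : x * exp (-x) < exp (-1) :=
  calc x * exp (-x) < exp (x - 1) * exp (-x) := by
        gcongr; linarith [add_one_lt_exp (sub_ne_zero.2 hx)]
    _ = exp (-1) := by rw [← exp_add]; ring_nf

lemma analyticAt_ofScalarsSum_treeCoeff {y : ℝ} (hy : |y| < exp (-1)) :
    AnalyticAt ℝ (ofScalarsSum (E := ℝ) treeCoeff) y := by
  set p := ofScalars ℝ treeCoeff
  have hr : ENNReal.ofReal (exp (-1)) ≤ p.radius := p.le_radius_of_bound (exp 1) fun n ↦ by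
    rw [coe_toNNReal _ (exp_pos _).le]
    have := treeCoeff_mul_pow_le (exp_pos (-1)).le n
    rwa [← exp_add, add_neg_cancel, exp_zero, one_pow, mul_one,
      ← norm_of_nonneg (treeCoeff_pos n).le, ← ofScalars_norm (E := ℝ)] at this
  have hy' : y ∈ Metric.eball (0 : ℝ) p.radius := by
    refine lt_of_lt_of_le ?_ hr
    rw [edist_zero_right, ← ofReal_norm]
    exact (ENNReal.ofReal_lt_ofReal_iff (exp_pos _)).2 hy
  exact (p.hasFPowerSeriesOnBall ((ENNReal.ofReal_pos.2 (exp_pos _)).trans_le hr)).analyticAt_of_mem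
    hy'

lemma sum_range_neg_one_pow_mul_choose_mul_add_one_pow (n : ℕ) :
    ∑ k ∈ range (n + 1), (-1 : ℝ) ^ (n - k) * n.choose k * ((k : ℝ) + 1) ^ n = n ! := by
  have := congr_fun (fwdDiff_iter_eq_factorial (R := ℝ) (n := n)) 1
  rw [fwdDiff_iter_eq_sum_shift] at this
  simpa [zsmul_eq_mul, add_comm] using this

lemma sum_range_treeCoeff_mul_neg_pow_div_factorial (n : ℕ) :
    ∑ k ∈ range (n + 1), treeCoeff k * ((-((k : ℝ) + 1)) ^ (n - k) / (n - k)!) = 1 := by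
  have hterm : ∀ k ∈ range (n + 1), treeCoeff k * ((-((k : ℝ) + 1)) ^ (n - k) / (n - k)!) =
      (-1 : ℝ) ^ (n - k) * n.choose k * ((k : ℝ) + 1) ^ n / n ! := fun k hk ↦ by
    have hkn : k ≤ n := Nat.lt_succ_iff.1 (mem_range.1 hk)
    rw [treeCoeff, Nat.cast_choose ℝ hkn, neg_pow, ← pow_mul_pow_sub _ hkn]
    field_simp
  rw [sum_congr rfl hterm, ← sum_div, sum_range_neg_one_pow_mul_choose_mul_add_one_pow,
    div_self (by positivity)]

lemma Real.hasSum_pow_div_factorial (y : ℝ) : HasSum (fun n ↦ y ^ n / n !) (exp y) :=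
  Real.exp_eq_exp_ℝ ▸ NormedSpace.expSeries_div_hasSum_exp y

theorem Summable.tsum_eq_tsum_sum_antidiagonal {A α : Type*} [AddCommMonoid A]
    [HasAntidiagonal A] [AddCommMonoid α] [TopologicalSpace α] [ContinuousAdd α] [T3Space α]
    {f : A × A → α} (hf : Summable f) :
    ∑' p, f p = ∑' n, ∑ p ∈ antidiagonal n, f p := by
  set e := HasAntidiagonal.sigmaAntidiagonalEquivProd (A := A)
  rw [← e.tsum_eq]
  exact ((e.summable_iff.2 hf).tsum_sigma' fun n ↦ (hasSum_fintype _).summable).trans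
    (tsum_congr fun n ↦ Finset.tsum_subtype (antidiagonal n) f)

noncomputable def treeDoubleTerm (x : ℝ) (p : ℕ × ℕ) : ℝ :=
  treeCoeff p.1 * x ^ p.1 * ((-((p.1 : ℝ) + 1) * x) ^ p.2 / p.2 !)

lemma tsum_treeDoubleTerm_mk (x : ℝ) (k : ℕ) :
    ∑' j, treeDoubleTerm x (k, j) = treeCoeff k * x ^ k * exp (-((k + 1) * x)) := by
  rw [← neg_mul]
  exact ((Real.hasSum_pow_div_factorial (-(k + 1) * x)).mul_left (treeCoeff k * x ^ k)).tsum_eq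

lemma sum_antidiagonal_treeDoubleTerm (x : ℝ) (n : ℕ) :
    ∑ p ∈ antidiagonal n, treeDoubleTerm x p = x ^ n := by
  rw [Nat.sum_antidiagonal_eq_sum_range_succ_mk, ← one_mul (x ^ n),
    ← sum_range_treeCoeff_mul_neg_pow_div_factorial n, sum_mul]
  refine sum_congr rfl fun k hk ↦ ?_
  have hkn : k ≤ n := Nat.lt_succ_iff.1 (mem_range.1 hk)
  rw [treeDoubleTerm, mul_pow, ← pow_mul_pow_sub x hkn]
  ring

lemma summable_treeDoubleTerm {x : ℝ} (hx : |x| * exp (1 + |x|) < 1) :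
    Summable (treeDoubleTerm x) := by
  have habs : ∀ p : ℕ × ℕ, |treeDoubleTerm x p| =
      treeCoeff p.1 * |x| ^ p.1 * ((((p.1 : ℝ) + 1) * |x|) ^ p.2 / p.2 !) := fun p ↦ by
    simp only [treeDoubleTerm, abs_mul, abs_div, abs_pow, abs_neg, Nat.abs_cast,
      abs_of_pos (treeCoeff_pos p.1), abs_of_nonneg (show (0 : ℝ) ≤ p.1 + 1 by positivity)]
  refine .of_abs ((summable_prod_of_nonneg fun _ ↦ abs_nonneg _).2 ⟨fun k ↦ ?_, ?_⟩)
  · simp_rw [habs]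
    exact (Real.summable_pow_div_factorial _).mul_left _
  · simp_rw [habs, tsum_mul_left, (Real.hasSum_pow_div_factorial _).tsum_eq,
      treeCoeff_mul_pow_mul_exp]
    refine (summable_treeCoeff_mul_pow (by positivity) ?_).mul_left _
    rwa [← mul_assoc, mul_comm (exp 1), mul_assoc, ← exp_add]

lemma tsum_treeCoeff_mul_pow_mul_exp_neg_of_abs {x : ℝ} (hx : |x| * exp (1 + |x|) < 1) :
    ∑' k : ℕ, treeCoeff k * x ^ k * exp (-((k + 1) * x)) = (1 - x)⁻¹ := by
  have hx1 : |x| < 1 :=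
    (le_mul_of_one_le_right (abs_nonneg x) (one_le_exp (by positivity))).trans_lt hx
  have hs := summable_treeDoubleTerm hx
  calc ∑' k : ℕ, treeCoeff k * x ^ k * exp (-((k + 1) * x))
      = ∑' (k) (j), treeDoubleTerm x (k, j) := by simp_rw [tsum_treeDoubleTerm_mk]
    _ = ∑' p, treeDoubleTerm x p := hs.tsum_prod.symm
    _ = ∑' n, ∑ p ∈ antidiagonal n, treeDoubleTerm x p := hs.tsum_eq_tsum_sum_antidiagonal
    _ = (1 - x)⁻¹ := by
        simp_rw [sum_antidiagonal_treeDoubleTerm, tsum_geometric_of_abs_lt_one hx1]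

lemma summable_treeCoeff_mul_pow_mul_exp_neg {x : ℝ} (hx0 : 0 ≤ x) (hx1 : x < 1) :
    Summable fun k : ℕ ↦ treeCoeff k * x ^ k * exp (-((k + 1) * x)) := by
  simp_rw [← mul_neg, treeCoeff_mul_pow_mul_exp]
  refine (summable_treeCoeff_mul_pow (by positivity) ?_).mul_left _
  calc exp 1 * (x * exp (-x)) < exp 1 * exp (-1) := by gcongr; exact mul_exp_neg_lt hx1.ne
    _ = 1 := by rw [← exp_add]; simp

theorem tsum_treeCoeff_mul_pow_mul_exp_neg {x : ℝ} (hx0 : 0 ≤ x) (hx1 : x < 1) :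
    ∑' k : ℕ, treeCoeff k * x ^ k * exp (-((k + 1) * x)) = (1 - x)⁻¹ := by
  set F : ℝ → ℝ := fun z ↦ ofScalarsSum treeCoeff (z * exp (-z)) * exp (-z)
  have hF : ∀ z, F z = ∑' k : ℕ, treeCoeff k * z ^ k * exp (-((k + 1) * z)) := fun z ↦ by
    simp_rw [F, ofScalarsSum_eq_tsum, ← tsum_mul_right, ← mul_neg, treeCoeff_mul_pow_mul_exp,
      smul_eq_mul, mul_comm]
  have hF_analytic : AnalyticOnNhd ℝ F (Set.Ico 0 1) := fun z hz ↦ by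
    have hz' : |z * exp (-z)| < exp (-1) := by
      rw [abs_of_nonneg (by have := hz.1; positivity)]
      exact mul_exp_neg_lt hz.2.ne
    have hexp : AnalyticAt ℝ (fun z : ℝ ↦ exp (-z)) z :=
      analyticAt_rexp.comp analyticAt_id.neg
    exact ((analyticAt_ofScalarsSum_treeCoeff hz').comp (f := fun z : ℝ ↦ z * exp (-z))
      (analyticAt_id.mul hexp)).mul hexp
  have hinv_analytic : AnalyticOnNhd ℝ (fun z : ℝ ↦ (1 - z)⁻¹) (Set.Ico 0 1) :=
    fun z hz ↦ (analyticAt_const.sub analyticAt_id).inv (sub_ne_zero.2 hz.2.ne')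
  have hnear : F =ᶠ[nhds 0] fun z : ℝ ↦ (1 - z)⁻¹ := by
    have : ContinuousAt (fun z : ℝ ↦ |z| * exp (1 + |z|)) 0 := by fun_prop
    filter_upwards [this.eventually_lt (continuousAt_const (y := 1)) (by simp)] with z hz
    rw [hF, tsum_treeCoeff_mul_pow_mul_exp_neg_of_abs hz]
  rw [← hF]
  exact hF_analytic.eqOn_of_preconnected_of_eventuallyEq hinv_analytic isPreconnected_Ico
    ⟨le_rfl, one_pos⟩ hnear ⟨hx0, hx1⟩

noncomputable def interDecodePMF (lam : ℝ) (x : ℕ) : ℝ :=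
  if x = 0 then Real.exp (-lam)
  else if x = 1 then lam * Real.exp (-lam)
  else (((x - 1 : ℕ) ^ (x - 2) : ℕ) : ℝ) / ((x : ℝ) * (Nat.factorial (x - 2)))
    * lam ^ x * Real.exp (-(x : ℝ) * lam)

lemma max_one_mul_interDecodePMF_add_two (lam : ℝ) (k : ℕ) :
    ((max (k + 2) 1 : ℕ) : ℝ) * interDecodePMF lam (k + 2) =
      lam ^ 2 * exp (-lam) * (treeCoeff k * lam ^ k * exp (-((k + 1) * lam))) := by
  have hexp : exp (-((k + 2 : ℕ) : ℝ) * lam) = exp (-lam) * exp (-((k + 1) * lam)) := by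
    rw [← exp_add]; push_cast; ring_nf
  simp only [interDecodePMF, treeCoeff, hexp, show max (k + 2) 1 = k + 2 by omega,
    show k + 2 - 1 = k + 1 by omega, Nat.add_sub_cancel, if_neg (Nat.add_one_ne_zero _),
    if_neg (show k + 2 ≠ 1 by omega)]
  push_cast
  field_simp
  ring

/-- First moment of `W = max(X,1)`:
`E[W] = E[X]/λ = e^{-λ}/(1-λ)`. -/
theorem stmt4 (lam : ℝ) (h0 : 0 < lam) (h1 : lam < 1) :
    ∑' x : ℕ, ((max x 1 : ℕ) : ℝ) *
      (if x = 0 then Real.exp (-lam)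
       else if x = 1 then lam * Real.exp (-lam)
       else (((x - 1 : ℕ) ^ (x - 2) : ℕ) : ℝ) / ((x : ℝ) * (Nat.factorial (x - 2)))
            * lam ^ x * Real.exp (-(x : ℝ) * lam))
      = ((lam / (1 - lam)) * Real.exp (-lam)) / lam ∧
    ((lam / (1 - lam)) * Real.exp (-lam)) / lam = Real.exp (-lam) / (1 - lam) := by
  have hlam : lam ≠ 0 := h0.ne'
  have hlam1 : 1 - lam ≠ 0 := sub_ne_zero.2 h1.ne'
  refine ⟨?_, by field_simp⟩
  change ∑' x : ℕ, ((max x 1 : ℕ) : ℝ) * interDecodePMF lam x = _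
  have hs : Summable fun k ↦ ((max (k + 2) 1 : ℕ) : ℝ) * interDecodePMF lam (k + 2) := by
    simp_rw [max_one_mul_interDecodePMF_add_two]
    exact (summable_treeCoeff_mul_pow_mul_exp_neg h0.le h1).mul_left _
  have hfirst : ∑ x ∈ range 2, ((max x 1 : ℕ) : ℝ) * interDecodePMF lam x =
      exp (-lam) + lam * exp (-lam) := by
    simp [interDecodePMF, sum_range_succ]
  rw [← Summable.sum_add_tsum_nat_add'
      (f := fun x ↦ ((max x 1 : ℕ) : ℝ) * interDecodePMF lam x) hs,
    hfirst, tsum_congr (max_one_mul_interDecodePMF_add_two lam), tsum_mul_left,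
    tsum_treeCoeff_mul_pow_mul_exp_neg h0.le h1]
  field_simp
  ring
end

section
/- Let λ ∈ (0,1). Define q(w) for integers w ≥ 1 by q(1) = (λ+1) e^{-λ} and q(w) = ((w-1)^{w-2}/(w(w-2)!)) λ^w e^{-wλ} for w ≥ 2. Then ∑_{w=1}^∞ q(w) = 1, i.e., q is a probability mass function on the positive integers. -/
/-!
Put `z = λ e^{-λ}`. The terms with `w ≥ 2` are `(w-1)^{w-1} z^w / w!`, so the claim reads
`W(z) = 1 - e^{-λ}` for `W(z) = ∑_{w ≥ 1} (w-1)^{w-1} z^w / w!`, a primitive of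
`V(z) = ∑ nⁿ zⁿ / n!`. The tree function `T(z) = ∑ n^{n-1} zⁿ / n!` has `z T' = V - 1`,
and Abel's identity turns the Cauchy product into `T V = V - 1`. Hence `T e^{-T} / z` has
derivative zero on `(0, 1/e)` and tends to `T'(0) = 1` at `0`, so `T(t e^{-t}) = t` and
`V(t e^{-t}) = 1/(1-t)` for `0 ≤ t < 1`. Then `W(t e^{-t})` and `1 - e^{-t}` both have
derivative `e^{-t}` and vanish at `0`.
-/

open Finset Real Filter Topology
open scoped Nat

lemma sum_range_alternating_choose_mul_pow_eq_zero {R : Type*} [CommRing R] {j n : ℕ}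
    (h : j < n) (x : R) :
    ∑ k ∈ range (n + 1), (-1 : R) ^ (n - k) * n.choose k * (x + k) ^ j = 0 := by
  have := congrFun (fwdDiff_iter_pow_eq_zero_of_lt (R := R) h) x
  rw [fwdDiff_iter_eq_sum_shift] at this
  simpa [zsmul_eq_mul] using this

/-- `A_n(y) = ∑ C(n,k) x (x+k)^{k-1} (y+n-k)^{n-k}` at `x = 1`; for `k = 0` the truncated
exponent `k - 1 = 0` agrees with `1 · 1^{-1}`. -/
noncomputable def abelSum (n : ℕ) (y : ℝ) : ℝ :=
  ∑ k ∈ range (n + 1),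
    (n.choose k : ℝ) * ((k : ℝ) + 1) ^ (k - 1) * (y + (n - k : ℕ)) ^ (n - k)

lemma hasDerivAt_abelSum (n : ℕ) (y : ℝ) :
    HasDerivAt (abelSum (n + 1)) ((n + 1) * abelSum n (y + 1)) y := by
  have h := HasDerivAt.fun_sum (u := range (n + 2)) fun k _ =>
    (((hasDerivAt_id y).add_const ((n + 1 - k : ℕ) : ℝ)).pow (n + 1 - k)).const_mul
      (((n + 1).choose k : ℝ) * ((k : ℝ) + 1) ^ (k - 1))
  refine h.congr_deriv ?_
  rw [sum_range_succ, Nat.sub_self, Nat.cast_zero, zero_mul, zero_mul, mul_zero, add_zero,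
    abelSum, mul_sum]
  refine sum_congr rfl fun k hk => ?_
  have hk : k ≤ n := Nat.lt_succ_iff.mp (mem_range.mp hk)
  have hchoose : ((n + 1).choose k : ℝ) * ((n - k : ℕ) + 1) = (n + 1) * n.choose k := by
    have := Nat.choose_mul_succ_eq n k
    rw [Nat.sub_add_comm hk, mul_comm (n.choose k)] at this
    exact_mod_cast this.symm
  rw [show n + 1 - k = n - k + 1 by omega, Nat.add_sub_cancel, id]
  push_cast
  linear_combination ((k + 1 : ℝ) ^ (k - 1) * (y + 1 + (n - k : ℕ)) ^ (n - k)) * hchoose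

-- At `y = -(n + 2)` each base `y + (n + 1 - k)` equals `-(k + 1)`, so the sum is an `(n+1)`-st
-- finite difference of `x ↦ xⁿ`.
lemma abelSum_succ_neg (n : ℕ) : abelSum (n + 1) (-(n + 2)) = 0 := by
  rw [← sum_range_alternating_choose_mul_pow_eq_zero (Nat.lt_succ_self n) (1 : ℝ), abelSum]
  refine sum_congr rfl fun k hk => ?_
  have hk : k ≤ n + 1 := Nat.lt_succ_iff.mp (mem_range.mp hk)
  have hpow : ((k : ℝ) + 1) ^ (k - 1) * (k + 1) ^ (n + 1 - k) = (1 + k) ^ n := by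
    rcases k with _ | k
    · simp
    · rw [← pow_add, add_comm (1 : ℝ)]; congr 1; omega
  rw [Nat.cast_sub hk,
    show -((n : ℝ) + 2) + ((n + 1 : ℕ) - k) = -1 * (k + 1) by push_cast; ring,
    mul_pow, ← hpow]
  ring

theorem abelSum_eq (n : ℕ) (y : ℝ) : abelSum n y = (y + n + 1) ^ n := by
  induction n generalizing y with
  | zero => simp [abelSum]
  | succ n ih =>
    have hderiv :
        ∀ x, HasDerivAt (fun x => abelSum (n + 1) x - (x + (n + 2)) ^ (n + 1)) 0 x := by
      intro x
      refine ((hasDerivAt_abelSum n x).fun_sub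
        (((hasDerivAt_id' x).add_const _).fun_pow (n + 1))).congr_deriv ?_
      rw [ih]; push_cast; ring
    have := is_const_of_deriv_eq_zero (fun x => (hderiv x).differentiableAt)
      (fun x => (hderiv x).deriv) y (-(n + 2))
    rw [abelSum_succ_neg] at this
    push_cast at this ⊢
    linear_combination this

section PowerSeries

variable {a b : ℕ → ℝ} {r y : ℝ}

lemma norm_mul_pow_le (hy : |y| ≤ r) (n : ℕ) : ‖a n * y ^ n‖ ≤ |a n| * r ^ n := by
  rw [norm_mul, norm_pow, Real.norm_eq_abs, Real.norm_eq_abs]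
  exact mul_le_mul_of_nonneg_left (pow_le_pow_left₀ (abs_nonneg y) hy n) (abs_nonneg _)

lemma tsum_mul_pow_mul_tsum_mul_pow (ha : Summable fun n => |a n| * r ^ n)
    (hb : Summable fun n => |b n| * r ^ n) (hy : |y| ≤ r) :
    (∑' n, a n * y ^ n) * (∑' n, b n * y ^ n) =
      ∑' n, (∑ k ∈ range (n + 1), a k * b (n - k)) * y ^ n := by
  rw [tsum_mul_tsum_eq_tsum_sum_range_of_summable_norm
    (ha.of_nonneg_of_le (fun _ => norm_nonneg _) (norm_mul_pow_le hy))
    (hb.of_nonneg_of_le (fun _ => norm_nonneg _) (norm_mul_pow_le hy))]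
  refine tsum_congr fun n => ?_
  rw [sum_mul]
  refine sum_congr rfl fun k hk => ?_
  rw [mul_mul_mul_comm, ← pow_add, Nat.add_sub_cancel' (Nat.lt_succ_iff.mp (mem_range.mp hk))]

lemma abs_div_natCast_add_one_le (c : ℝ) (n : ℕ) : |c / (n + 1)| ≤ |c| := by
  rw [abs_div, abs_of_pos (Nat.cast_add_one_pos n : (0 : ℝ) < n + 1)]
  exact div_le_self (abs_nonneg c) (by simp)

lemma summable_div_succ_mul_pow_succ (hb : Summable fun n => |b n| * r ^ n) (hy : |y| ≤ r) :
    Summable fun n => b n / (n + 1) * y ^ (n + 1) := by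
  refine Summable.of_norm_bounded (hb.mul_right |y|) fun n => ?_
  rw [pow_succ, ← mul_assoc, norm_mul, Real.norm_eq_abs y]
  refine mul_le_mul_of_nonneg_right ?_ (abs_nonneg y)
  exact (norm_mul_pow_le (a := fun n => b n / (n + 1)) hy n).trans <|
    mul_le_mul_of_nonneg_right (abs_div_natCast_add_one_le _ n)
      (pow_nonneg ((abs_nonneg y).trans hy) n)

theorem hasDerivAt_tsum_div_succ_mul_pow_succ (hb : Summable fun n => |b n| * r ^ n)
    (hy : |y| < r) :
    HasDerivAt (fun z => ∑' n, b n / (n + 1) * z ^ (n + 1)) (∑' n, b n * y ^ n) y := by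
  have hr : 0 < r := (abs_nonneg y).trans_lt hy
  refine hasDerivAt_tsum_of_isPreconnected hb isOpen_Ioo isPreconnected_Ioo
    (fun n z _ => ?_) (fun n z hz => norm_mul_pow_le (abs_le.mpr ⟨hz.1.le, hz.2.le⟩) n)
    (Set.mem_Ioo.mpr ⟨neg_neg_of_pos hr, hr⟩) (by simp) (abs_lt.mp hy)
  refine ((hasDerivAt_pow (n + 1) z).const_mul (b n / (n + 1))).congr_deriv ?_
  push_cast
  field_simp

end PowerSeries

lemma eq_of_hasDerivAt_zero_of_tendsto_nhdsGT {f : ℝ → ℝ} {a b c x : ℝ}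
    (hf : ∀ z ∈ Set.Ioo a b, HasDerivAt f 0 z) (hlim : Tendsto f (𝓝[>] a) (𝓝 c))
    (hx : x ∈ Set.Ioo a b) : f x = c := by
  have hconst : ∀ z ∈ Set.Ioo a b, f z = f x := fun z hz =>
    isOpen_Ioo.is_const_of_deriv_eq_zero isPreconnected_Ioo
      (fun w hw => (hf w hw).differentiableAt.differentiableWithinAt) (fun w hw => (hf w hw).deriv)
      hz hx
  refine tendsto_nhds_unique (tendsto_const_nhds.congr' ?_) hlim
  filter_upwards [Ioo_mem_nhdsGT (hx.1.trans hx.2)] with z hz using (hconst z hz).symm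

lemma hasDerivAt_mul_exp_neg (t : ℝ) :
    HasDerivAt (fun s => s * exp (-s)) ((1 - t) * exp (-t)) t := by
  refine ((hasDerivAt_id' t).mul (hasDerivAt_neg' t).exp).congr_deriv ?_
  ring

lemma strictMonoOn_mul_exp_neg : StrictMonoOn (fun t => t * exp (-t)) (Set.Icc 0 1) := by
  refine strictMonoOn_of_deriv_pos (convex_Icc 0 1)
    (fun t _ => (hasDerivAt_mul_exp_neg t).continuousAt.continuousWithinAt) fun t ht => ?_
  rw [interior_Icc] at ht
  rw [(hasDerivAt_mul_exp_neg t).deriv]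
  exact mul_pos (sub_pos.mpr ht.2) (exp_pos _)

lemma mul_exp_neg_lt_exp_neg_one {t : ℝ} (ht : t ≠ 1) : t * exp (-t) < exp (-1) :=
  calc t * exp (-t) < exp (t - 1) * exp (-t) := by
        have := add_one_lt_exp (sub_ne_zero.mpr ht)
        gcongr
        linarith
    _ = exp (-1) := by rw [← exp_add]; ring_nf

noncomputable def selfPowCoeff (n : ℕ) : ℝ := (n : ℝ) ^ n / n !

lemma selfPowCoeff_succ (n : ℕ) : selfPowCoeff (n + 1) = (n + 1) ^ n / n ! := by
  rw [selfPowCoeff, Nat.factorial_succ, pow_succ]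
  push_cast
  field_simp

lemma selfPowCoeff_nonneg (n : ℕ) : 0 ≤ selfPowCoeff n := by
  unfold selfPowCoeff; positivity

lemma sum_range_selfPowCoeff_succ_div_mul (n : ℕ) :
    ∑ k ∈ range (n + 1), selfPowCoeff (k + 1) / (k + 1) * selfPowCoeff (n - k) =
      selfPowCoeff (n + 1) := by
  have hterm : ∀ k ∈ range (n + 1), selfPowCoeff (k + 1) / (k + 1) * selfPowCoeff (n - k) =
      n.choose k * ((k : ℝ) + 1) ^ (k - 1) * (0 + (n - k : ℕ)) ^ (n - k) / n ! := by
    intro k hk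
    have hk : k ≤ n := Nat.lt_succ_iff.mp (mem_range.mp hk)
    have hpow : ((k : ℝ) + 1) ^ (k + 1) = (k + 1) ^ (k - 1) * (k + 1) ^ 2 := by
      rcases k with _ | k
      · simp
      · rw [← pow_add, Nat.add_sub_cancel]
    rw [selfPowCoeff, selfPowCoeff, Nat.cast_choose ℝ hk, Nat.factorial_succ]
    push_cast
    rw [hpow, zero_add]
    field_simp
  rw [sum_congr rfl hterm, ← sum_div, ← abelSum, abelSum_eq, selfPowCoeff, Nat.factorial_succ,
    pow_succ]
  push_cast
  field_simp
  ring

lemma summable_selfPowCoeff_add_mul_pow (m : ℕ) {r : ℝ} (hr0 : 0 ≤ r) (hr : r < exp (-1)) :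
    Summable fun n => |selfPowCoeff (n + m)| * r ^ n := by
  have hq : exp 1 * r < 1 := by
    calc exp 1 * r < exp 1 * exp (-1) := by gcongr
      _ = 1 := by rw [← exp_add, add_neg_cancel, exp_zero]
  refine ((summable_geometric_of_lt_one (by positivity) hq).mul_left (exp m)).of_nonneg_of_le
    (fun n => by positivity) fun n => ?_
  have hexp : selfPowCoeff (n + m) ≤ exp 1 ^ (n + m) := by
    rw [exp_one_pow, selfPowCoeff]
    exact_mod_cast Real.pow_div_factorial_le_exp _ (Nat.cast_nonneg (n + m)) (n + m)
  rw [abs_of_nonneg (selfPowCoeff_nonneg _), mul_pow, ← mul_assoc, ← exp_one_pow m,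
    ← pow_add, add_comm m]
  exact mul_le_mul_of_nonneg_right hexp (by positivity)

/-- Cayley's tree function `T(z) = ∑_{n ≥ 1} n^{n-1} zⁿ / n!`. -/
noncomputable def treeFunction (z : ℝ) : ℝ :=
  ∑' n, selfPowCoeff (n + 1) / (n + 1) * z ^ (n + 1)

noncomputable def selfPowSeries (z : ℝ) : ℝ := ∑' n, selfPowCoeff n * z ^ n

/-- `W(z) = ∑_{w ≥ 1} (w-1)^{w-1} z^w / w!`. -/
noncomputable def selfPowPrimitive (z : ℝ) : ℝ := ∑' n, selfPowCoeff n / (n + 1) * z ^ (n + 1)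

section TreeFunction

variable {y : ℝ}

lemma hasDerivAt_treeFunction (hy : |y| < exp (-1)) :
    HasDerivAt treeFunction (∑' n, selfPowCoeff (n + 1) * y ^ n) y := by
  obtain ⟨r, hyr, hr⟩ := exists_between hy
  exact hasDerivAt_tsum_div_succ_mul_pow_succ
    (summable_selfPowCoeff_add_mul_pow 1 ((abs_nonneg y).trans hyr.le) hr) hyr

lemma hasDerivAt_selfPowPrimitive (hy : |y| < exp (-1)) :
    HasDerivAt selfPowPrimitive (selfPowSeries y) y := by
  obtain ⟨r, hyr, hr⟩ := exists_between hy
  have hs := summable_selfPowCoeff_add_mul_pow 0 ((abs_nonneg y).trans hyr.le) hr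
  simp only [add_zero] at hs
  exact hasDerivAt_tsum_div_succ_mul_pow_succ hs hyr

lemma hasSum_selfPowPrimitive (hy : |y| < exp (-1)) :
    HasSum (fun n => selfPowCoeff n / (n + 1) * y ^ (n + 1)) (selfPowPrimitive y) := by
  obtain ⟨r, hyr, hr⟩ := exists_between hy
  refine (summable_div_succ_mul_pow_succ (r := r) ?_ hyr.le).hasSum
  simpa using summable_selfPowCoeff_add_mul_pow 0 ((abs_nonneg y).trans hyr.le) hr

lemma selfPowSeries_eq_one_add_mul (hy : |y| < exp (-1)) :
    selfPowSeries y = 1 + y * ∑' n, selfPowCoeff (n + 1) * y ^ n := by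
  obtain ⟨r, hyr, hr⟩ := exists_between hy
  have hs : Summable fun n => selfPowCoeff n * y ^ n := by
    refine Summable.of_norm_bounded ?_ (norm_mul_pow_le hyr.le)
    simpa using summable_selfPowCoeff_add_mul_pow 0 ((abs_nonneg y).trans hyr.le) hr
  rw [selfPowSeries, hs.tsum_eq_zero_add, ← tsum_mul_left]
  congr 1
  · simp [selfPowCoeff]
  · exact tsum_congr fun n => by ring

lemma treeFunction_mul_selfPowSeries (hy : |y| < exp (-1)) :
    treeFunction y * selfPowSeries y = selfPowSeries y - 1 := by
  obtain ⟨r, hyr, hr⟩ := exists_between hy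
  have hr0 : 0 ≤ r := (abs_nonneg y).trans hyr.le
  have hS : Summable fun n => |selfPowCoeff (n + 1) / (n + 1)| * r ^ n := by
    refine (summable_selfPowCoeff_add_mul_pow 1 hr0 hr).of_nonneg_of_le (fun n => by positivity)
      fun n => mul_le_mul_of_nonneg_right (abs_div_natCast_add_one_le _ n) (by positivity)
  have hT : treeFunction y = y * ∑' n, selfPowCoeff (n + 1) / (n + 1) * y ^ n := by
    rw [treeFunction, ← tsum_mul_left]
    exact tsum_congr fun n => by ring
  rw [hT, mul_assoc, selfPowSeries,
    tsum_mul_pow_mul_tsum_mul_pow hS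
      (by simpa using summable_selfPowCoeff_add_mul_pow 0 hr0 hr) hyr.le]
  simp_rw [sum_range_selfPowCoeff_succ_div_mul]
  rw [← selfPowSeries, selfPowSeries_eq_one_add_mul hy]
  ring

lemma selfPowSeries_nonneg (hy : 0 ≤ y) : 0 ≤ selfPowSeries y :=
  tsum_nonneg fun n => mul_nonneg (selfPowCoeff_nonneg n) (pow_nonneg hy n)

lemma treeFunction_nonneg (hy : 0 ≤ y) : 0 ≤ treeFunction y :=
  tsum_nonneg fun n => mul_nonneg (div_nonneg (selfPowCoeff_nonneg _) n.cast_add_one_pos.le)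
    (pow_nonneg hy _)

lemma treeFunction_lt_one (hy0 : 0 ≤ y) (hy : y < exp (-1)) : treeFunction y < 1 := by
  have h := treeFunction_mul_selfPowSeries (y := y) (by rwa [abs_of_nonneg hy0])
  nlinarith [selfPowSeries_nonneg hy0]

lemma treeFunction_zero : treeFunction 0 = 0 := by
  simp [treeFunction]

lemma hasDerivAt_treeFunction_zero : HasDerivAt treeFunction 1 0 := by
  convert hasDerivAt_treeFunction (y := 0) (by simp [exp_pos])
  rw [tsum_eq_single 0 fun n hn => by simp [hn]]
  simp [selfPowCoeff]

lemma treeFunction_mul_exp_neg (hy0 : 0 ≤ y) (hy : y < exp (-1)) :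
    treeFunction y * exp (-treeFunction y) = y := by
  rcases hy0.eq_or_lt with rfl | hpos
  · simp [treeFunction_zero]
  have hderiv : ∀ z ∈ Set.Ioo 0 (exp (-1)),
      HasDerivAt (fun z => treeFunction z * exp (-treeFunction z) / z) 0 z := by
    intro z hz
    have hz' : |z| < exp (-1) := by rw [abs_of_pos hz.1]; exact hz.2
    have hT := hasDerivAt_treeFunction hz'
    refine ((hT.fun_mul hT.fun_neg.exp).fun_div (hasDerivAt_id' z) hz.1.ne').congr_deriv ?_
    have h1 := treeFunction_mul_selfPowSeries hz'
    have h2 := selfPowSeries_eq_one_add_mul hz'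
    rw [div_eq_zero_iff]
    left
    linear_combination -exp (-treeFunction z) * (h1 + (1 - treeFunction z) * h2)
  have hlim :
      Tendsto (fun z => treeFunction z * exp (-treeFunction z) / z) (𝓝[>] 0) (𝓝 1) := by
    have hslope := hasDerivAt_treeFunction_zero.tendsto_slope_zero_right
    have hexp : Tendsto (fun z => exp (-treeFunction z)) (𝓝[>] 0) (𝓝 1) := by
      have := hasDerivAt_treeFunction_zero.continuousAt.neg.rexp.tendsto
      simpa [treeFunction_zero] using this.mono_left nhdsWithin_le_nhds
    refine (mul_one (1 : ℝ) ▸ hslope.mul hexp).congr fun z => ?_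
    simp only [zero_add, treeFunction_zero, sub_zero, smul_eq_mul]
    ring
  have key := eq_of_hasDerivAt_zero_of_tendsto_nhdsGT hderiv hlim ⟨hpos, hy⟩
  exact (div_eq_one_iff_eq hpos.ne').mp key

end TreeFunction

section LambertParametrization

variable {t : ℝ}

lemma abs_mul_exp_neg_lt (h0 : 0 ≤ t) (h1 : t < 1) : |t * exp (-t)| < exp (-1) := by
  rw [abs_of_nonneg (by positivity)]
  exact mul_exp_neg_lt_exp_neg_one h1.ne

lemma treeFunction_mul_exp_neg_self (h0 : 0 ≤ t) (h1 : t < 1) :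
    treeFunction (t * exp (-t)) = t := by
  have hy0 : 0 ≤ t * exp (-t) := by positivity
  have hy := mul_exp_neg_lt_exp_neg_one h1.ne
  exact strictMonoOn_mul_exp_neg.injOn
    ⟨treeFunction_nonneg hy0, (treeFunction_lt_one hy0 hy).le⟩ ⟨h0, h1.le⟩
    (treeFunction_mul_exp_neg hy0 hy)

lemma selfPowSeries_mul_exp_neg_self (h0 : 0 ≤ t) (h1 : t < 1) :
    selfPowSeries (t * exp (-t)) * (1 - t) = 1 := by
  have h := treeFunction_mul_selfPowSeries (abs_mul_exp_neg_lt h0 h1)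
  rw [treeFunction_mul_exp_neg_self h0 h1] at h
  linear_combination -h

lemma selfPowPrimitive_mul_exp_neg_self (h0 : 0 ≤ t) (h1 : t < 1) :
    selfPowPrimitive (t * exp (-t)) = 1 - exp (-t) := by
  have hW : ∀ s ∈ Set.Icc 0 t,
      HasDerivAt (fun s => selfPowPrimitive (s * exp (-s))) (exp (-s)) s := by
    intro s hs
    have hs1 : s < 1 := hs.2.trans_lt h1
    refine ((hasDerivAt_selfPowPrimitive (abs_mul_exp_neg_lt hs.1 hs1)).comp s
      (hasDerivAt_mul_exp_neg s)).congr_deriv ?_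
    linear_combination exp (-s) * selfPowSeries_mul_exp_neg_self hs.1 hs1
  have hE : ∀ s, HasDerivAt (fun s => 1 - exp (-s)) (exp (-s)) s := fun s => by
    simpa using ((hasDerivAt_neg' s).exp).const_sub 1
  exact eq_of_has_deriv_right_eq
    (fun s hs => (hW s (Set.Ico_subset_Icc_self hs)).hasDerivWithinAt)
    (fun s _ => (hE s).hasDerivWithinAt) (fun s hs => (hW s hs).continuousAt.continuousWithinAt)
    (fun s _ => (hE s).continuousAt.continuousWithinAt) (by simp [selfPowPrimitive])
    t ⟨h0, le_rfl⟩

end LambertParametrization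

/-- The pmf of `W = max(X,1)` sums to 1: with `q(1) = (λ+1)e^{-λ}` and
`q(w) = (w-1)^{w-2} λ^w e^{-wλ} / (w (w-2)!)` for `w ≥ 2`,
`∑_{w=1}^∞ q(w) = 1` (indexed by `w = k + 1`, `k ∈ ℕ`). -/
theorem stmt5 (lam : ℝ) (h0 : 0 < lam) (h1 : lam < 1) :
    ∑' k : ℕ,
      (if k + 1 = 1 then (lam + 1) * Real.exp (-lam)
       else (((k + 1 - 1 : ℕ) ^ (k + 1 - 2) : ℕ) : ℝ)
              / (((k + 1 : ℕ) : ℝ) * (Nat.factorial (k + 1 - 2)))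
            * lam ^ (k + 1) * Real.exp (-((k + 1 : ℕ) : ℝ) * lam)) = 1 := by
  have hW := hasSum_selfPowPrimitive (abs_mul_exp_neg_lt h0.le h1)
  rw [selfPowPrimitive_mul_exp_neg_self h0.le h1] at hW
  convert (hW.add (hasSum_ite_eq 0 (exp (-lam)))).tsum_eq using 1
  · refine tsum_congr fun k => ?_
    rcases k with _ | k
    · simp [selfPowCoeff]
      ring
    · rw [if_neg (by omega), if_neg (by omega), Nat.add_sub_cancel, selfPowCoeff_succ,
        show k + 1 + 1 - 2 = k by omega, mul_pow, ← exp_nat_mul]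
      push_cast
      field_simp
      ring
  · ring
end

section
/- Let λ ∈ (0,1) and for integers x ≥ 2 and 2 ≤ y ≤ x set f(x,y) = (λ^y e^{-λ}/y!) · ((y-1)(x-1)^{x-y-1} λ^{x-y} e^{-(x-1)λ})/((x-y)!). Then ∑_{y=2}^{x} f(x,y) = ((x-1)^{x-2}/(x(x-2)!)) λ^x e^{-xλ}. -/
/-!
Since `(x-1)^(x-y-1) = (x-1)^(x-y) / (x-1)` and `y! (x-y)! = x! / C(x,y)`, the sum equals
`λ^x e^{-xλ} / (x! (x-1))` times `∑_{y=2}^{x} C(x,y) (y-1) (x-1)^(x-y)`. The binomial theorem and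
its derivative give `∑_{y=0}^{x} C(x,y) (y-1) a^(x-y) = x (a+1)^(x-1) - (a+1)^x`, which vanishes
at `a = x-1`; the terms `y = 0, 1` contribute `-(x-1)^x`, so the remaining sum is `(x-1)^x`.
-/

open Finset

section BinomialSums

variable {R : Type*}

lemma sum_range_choose_mul_pow [CommSemiring R] (n : ℕ) (a : R) :
    ∑ k ∈ range (n + 1), (n.choose k : R) * a ^ (n - k) = (a + 1) ^ n := by
  rw [add_comm a 1, add_pow]
  exact sum_congr rfl fun k _ ↦ by ring

lemma sum_range_choose_mul_mul_pow [CommSemiring R] (n : ℕ) (a : R) :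
    ∑ k ∈ range (n + 1), (n.choose k : R) * k * a ^ (n - k) = n * (a + 1) ^ (n - 1) := by
  cases n with
  | zero => simp
  | succ m =>
    have hchoose (k : ℕ) :
        ((m + 1).choose (k + 1) : R) * (k + 1 : ℕ) = (m + 1 : ℕ) * m.choose k := by
      rw [← Nat.cast_mul, ← Nat.cast_mul, Nat.add_one_mul_choose_eq]
    rw [sum_range_succ', Nat.add_sub_cancel, ← sum_range_choose_mul_pow, mul_sum]
    simp only [Nat.cast_zero, mul_zero, zero_mul, add_zero, Nat.add_sub_add_right]
    refine sum_congr rfl fun k _ ↦ ?_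
    rw [hchoose]
    ring

lemma sum_range_choose_mul_sub_one_mul_pow [CommRing R] (n : ℕ) (a : R) :
    ∑ k ∈ range (n + 1), (n.choose k : R) * (k - 1) * a ^ (n - k)
      = n * (a + 1) ^ (n - 1) - (a + 1) ^ n := by
  simp only [mul_sub, sub_mul, mul_one, sum_sub_distrib, sum_range_choose_mul_mul_pow,
    sum_range_choose_mul_pow]

lemma sum_Icc_two_choose_mul_sub_one_mul_pow [CommRing R] {n : ℕ} (hn : n ≠ 0) :
    ∑ k ∈ Icc 2 n, (n.choose k : R) * (k - 1) * ((n : R) - 1) ^ (n - k) = ((n : R) - 1) ^ n := by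
  have hfull := sum_range_choose_mul_sub_one_mul_pow n ((n : R) - 1)
  rw [sub_add_cancel, mul_pow_sub_one hn, sub_self,
    ← sum_range_add_sum_Ico _ (by omega : 2 ≤ n + 1), Ico_add_one_right_eq_Icc] at hfull
  simp only [sum_range_succ, range_one, sum_singleton, Nat.choose_zero_right, Nat.cast_one,
    Nat.cast_zero, zero_sub, mul_neg, mul_one, tsub_zero, neg_mul, one_mul, Nat.choose_one_right,
    sub_self, mul_zero, zero_mul, add_zero] at hfull
  linear_combination hfull

end BinomialSums

lemma zpow_natCast_sub_natCast_sub_one {K : Type*} [DivisionRing K] {a : K} (ha : a ≠ 0)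
    {m n : ℕ} (h : n ≤ m) : a ^ ((m : ℤ) - n - 1) = a ^ (m - n) / a := by
  rw [zpow_sub_one₀ ha, ← Nat.cast_sub h, zpow_natCast, div_eq_mul_inv]

lemma poisson_mul_borelTanner_eq (lam : ℝ) {x y : ℕ} (hyx : y ≤ x) (hx : (x : ℝ) - 1 ≠ 0) :
    (lam ^ y * Real.exp (-lam) / y.factorial)
        * (((y : ℝ) - 1) * ((x : ℝ) - 1) ^ ((x : ℤ) - (y : ℤ) - 1)
            * lam ^ (x - y) * Real.exp (-((x : ℝ) - 1) * lam) / (x - y).factorial)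
      = lam ^ x * Real.exp (-x * lam) / (x.factorial * ((x : ℝ) - 1))
          * (x.choose y * ((y : ℝ) - 1) * ((x : ℝ) - 1) ^ (x - y)) := by
  have hpow : lam ^ x = lam ^ y * lam ^ (x - y) := by rw [← pow_add, Nat.add_sub_cancel' hyx]
  have hexp : Real.exp (-x * lam) = Real.exp (-lam) * Real.exp (-((x : ℝ) - 1) * lam) := by
    rw [← Real.exp_add]; ring_nf
  have hfact : (x.factorial : ℝ) = x.choose y * y.factorial * (x - y).factorial := by
    exact_mod_cast (Nat.choose_mul_factorial_mul_factorial hyx).symm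
  have hchoose : (x.choose y : ℝ) ≠ 0 := by exact_mod_cast (Nat.choose_pos hyx).ne'
  rw [zpow_natCast_sub_natCast_sub_one hx hyx, hpow, hexp, hfact]
  field_simp

theorem stmt7_general (lam : ℝ) (x : ℕ) (hx : 2 ≤ x) :
    ∑ y ∈ Finset.Icc 2 x,
      (lam ^ y * Real.exp (-lam) / (Nat.factorial y))
        * (((y : ℝ) - 1) * ((x : ℝ) - 1) ^ ((x : ℤ) - (y : ℤ) - 1)
            * lam ^ (x - y) * Real.exp (-((x : ℝ) - 1) * lam) / (Nat.factorial (x - y)))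
    = (((x : ℝ) - 1) ^ (x - 2) / ((x : ℝ) * (Nat.factorial (x - 2))))
        * lam ^ x * Real.exp (-(x : ℝ) * lam) := by
  obtain ⟨m, rfl⟩ := Nat.exists_eq_add_of_le' hx
  have hm : ((m + 2 : ℕ) : ℝ) - 1 = m + 1 := by push_cast; ring
  have hsum := sum_Icc_two_choose_mul_sub_one_mul_pow (R := ℝ) (n := m + 2) (by omega)
  rw [sum_congr rfl fun y hy ↦
      poisson_mul_borelTanner_eq lam (mem_Icc.mp hy).2 (by rw [hm]; positivity),
    ← mul_sum, hsum, hm, Nat.add_sub_cancel, Nat.factorial_succ, Nat.factorial_succ]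
  push_cast
  field_simp
  ring

/-- Convolution of Poisson with Borel–Tanner: for `0 < λ < 1` and `x ≥ 2`,
`∑_{y=2}^{x} (λ^y e^{-λ}/y!) ((y-1)(x-1)^{x-y-1} λ^{x-y} e^{-(x-1)λ}/(x-y)!)
  = ((x-1)^{x-2}/(x (x-2)!)) λ^x e^{-xλ}`,
where the exponent `x - y - 1` is an integer power. -/
theorem stmt7 (lam : ℝ) (h0 : 0 < lam) (h1 : lam < 1) (x : ℕ) (hx : 2 ≤ x) :
    ∑ y ∈ Finset.Icc 2 x,
      (lam ^ y * Real.exp (-lam) / (Nat.factorial y))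
        * (((y : ℝ) - 1) * ((x : ℝ) - 1) ^ ((x : ℤ) - (y : ℤ) - 1)
            * lam ^ (x - y) * Real.exp (-((x : ℝ) - 1) * lam) / (Nat.factorial (x - y)))
    = (((x : ℝ) - 1) ^ (x - 2) / ((x : ℝ) * (Nat.factorial (x - 2))))
        * lam ^ x * Real.exp (-(x : ℝ) * lam) :=
  stmt7_general lam x hx
end
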